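/- Let b > 0, ρ ∈ (−1,1), α ∈ ℝ with α + b√(1−ρ²) > 0 and b(1+ρ) < 2, b(1−ρ) < 2, N(l) = α + b(ρl + √(l²+1)), and μ ∈ ℝ. Define G₁(l) = (1 − N'(l)((l+μ)/(2N(l)) + 1/4))·(1 − N'(l)((l+μ)/(2N(l)) − 1/4)) and G₂(l) = N''(l) − N'(l)²/(2N(l)). Assume both factors of G₁ are positive for every l ∈ ℝ, and let l₁ < 0 < l₂ be the two zeros of G₂ (so G₂ > 0 exactly on (l₁, l₂)). Then σ* := sup_{l ≤ l₁ or l ≥ l₂} (−G₂(l)/(2G₁(l))) is finite, nonnegative and attained at some real point, and for every σ > 0: G₁(l) + G₂(l)/(2σ) ≥ 0 for all l ∈ ℝ if and only if σ ≥ σ*. -/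

import Mathlib

/-!
On the closed set `S = {l ≤ l₁} ∪ {l₂ ≤ l}`, where `G₂ ≤ 0`, the ratio `-G₂ / (2 G₁)` is continuous
and nonnegative, and it tends to `0` at `±∞`: `G₂ → 0`, while `G₁` tends to
`(1/2 - b(1 ± ρ)/4)(1/2 + b(1 ± ρ)/4) > 0`. Hence the ratio attains its supremum `σ*` on `S`.
As `G₁ > 0`, the inequality `0 ≤ G₁ + G₂ / (2σ)` at `l` says exactly `-G₂(l) / (2 G₁(l)) ≤ σ`, which
holds automatically off `S`, where `G₂ > 0`. The limit at `-∞` is the limit at `+∞` for the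
reflected data `ρ ↦ -ρ`, `μ ↦ -μ`, `l ↦ -l`.
-/

open Filter Topology Real

theorem sqrt_one_sub_sq_le_mul_add_sqrt {ρ : ℝ} (hρ : ρ ^ 2 ≤ 1) (l : ℝ) :
    √(1 - ρ ^ 2) ≤ ρ * l + √(l ^ 2 + 1) := by
  have hs : √(1 - ρ ^ 2) ^ 2 = 1 - ρ ^ 2 := sq_sqrt (by linarith)
  have : √(1 - ρ ^ 2) - ρ * l ≤ √(l ^ 2 + 1) :=
    le_sqrt_of_sq_le (by nlinarith [sq_nonneg (ρ + √(1 - ρ ^ 2) * l)])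
  linarith

theorem exists_isMaxOn_of_nonneg_of_tendsto_cocompact {X : Type*} [TopologicalSpace X]
    {f : X → ℝ} {S : Set X} (hf : Continuous f) (hS : IsClosed S) (hne : S.Nonempty)
    (hf₀ : ∀ x ∈ S, 0 ≤ f x) (hlim : Tendsto f (cocompact X) (𝓝 0)) :
    ∃ x ∈ S, IsMaxOn f S x := by
  by_cases hpos : ∃ x ∈ S, 0 < f x
  · obtain ⟨x₀, hx₀, hfx₀⟩ := hpos
    refine hf.continuousOn.exists_isMaxOn' hS hx₀ ?_
    exact (hlim.eventually (gt_mem_nhds hfx₀)).filter_mono inf_le_left |>.mono fun _ h => h.le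
  · push Not at hpos
    obtain ⟨x₀, hx₀⟩ := hne
    exact ⟨x₀, hx₀, fun y hy => (hpos y hy).trans (hf₀ x₀ hx₀)⟩

theorem nonneg_add_div_iff_neg_div_le {g₁ g₂ σ : ℝ} (hg₁ : 0 < g₁) (hσ : 0 < σ) :
    0 ≤ g₁ + g₂ / (2 * σ) ↔ -g₂ / (2 * g₁) ≤ σ := by
  have h2σ : 0 < 2 * σ := by positivity
  rw [div_le_iff₀ (by positivity), ← mul_nonneg_iff_of_pos_left h2σ, mul_add,
    mul_div_cancel₀ _ h2σ.ne']
  constructor <;> intro h <;> linarith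

theorem tendsto_div_sqrt_sq_add_one_atTop :
    Tendsto (fun l : ℝ => l / √(l ^ 2 + 1)) atTop (𝓝 1) := by
  have h : Tendsto (fun l : ℝ => √(1 - (l ^ 2 + 1)⁻¹)) atTop (𝓝 1) := by
    have := (tendsto_atTop_add_const_right atTop (1 : ℝ)
      (tendsto_pow_atTop two_ne_zero)).inv_tendsto_atTop
    simpa using ((tendsto_const_nhds (x := (1 : ℝ))).sub this).sqrt
  refine h.congr' ?_
  filter_upwards [eventually_gt_atTop 0] with l hl
  rw [show 1 - (l ^ 2 + 1)⁻¹ = l ^ 2 / (l ^ 2 + 1) by field_simp; ring,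
    sqrt_div (sq_nonneg l), sqrt_sq hl.le]

structure IsSVIDurrleman (b ρ α μ : ℝ) (N N' N'' G₁ G₂ : ℝ → ℝ) : Prop where
  N_eq : ∀ l, N l = α + b * (ρ * l + √(l ^ 2 + 1))
  N'_eq : ∀ l, N' l = b * (ρ + l / √(l ^ 2 + 1))
  N''_eq : ∀ l, N'' l = b / (l ^ 2 + 1) ^ ((3 : ℝ) / 2)
  G₁_eq : ∀ l, G₁ l = (1 - N' l * ((l + μ) / (2 * N l) + 1 / 4)) *
    (1 - N' l * ((l + μ) / (2 * N l) - 1 / 4))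
  G₂_eq : ∀ l, G₂ l = N'' l - N' l ^ 2 / (2 * N l)

namespace IsSVIDurrleman

variable {b ρ α μ : ℝ} {N N' N'' G₁ G₂ : ℝ → ℝ}

theorem reflect (h : IsSVIDurrleman b ρ α μ N N' N'' G₁ G₂) :
    IsSVIDurrleman b (-ρ) α (-μ) (fun l => N (-l)) (fun l => -N' (-l)) (fun l => N'' (-l))
      (fun l => G₁ (-l)) (fun l => G₂ (-l)) where
  N_eq l := by rw [h.N_eq, neg_sq]; ring
  N'_eq l := by rw [h.N'_eq, neg_sq]; ring
  N''_eq l := by rw [h.N''_eq, neg_sq]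
  G₁_eq l := by rw [h.G₁_eq]; ring
  G₂_eq l := by rw [h.G₂_eq]; ring

theorem N_pos (h : IsSVIDurrleman b ρ α μ N N' N'' G₁ G₂) (hb : 0 ≤ b) (hρ : ρ ^ 2 ≤ 1)
    (hα : 0 < α + b * √(1 - ρ ^ 2)) (l : ℝ) : 0 < N l := by
  rw [h.N_eq]
  nlinarith [mul_le_mul_of_nonneg_left (sqrt_one_sub_sq_le_mul_add_sqrt hρ l) hb]

theorem continuous_N (h : IsSVIDurrleman b ρ α μ N N' N'' G₁ G₂) : Continuous N := by
  rw [funext h.N_eq]; fun_prop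

theorem continuous_N' (h : IsSVIDurrleman b ρ α μ N N' N'' G₁ G₂) : Continuous N' := by
  rw [funext h.N'_eq]; fun_prop (disch := intro; positivity)

theorem continuous_G₁ (h : IsSVIDurrleman b ρ α μ N N' N'' G₁ G₂) (hN : ∀ l, N l ≠ 0) :
    Continuous G₁ := by
  have := h.continuous_N
  have := h.continuous_N'
  rw [funext h.G₁_eq]
  fun_prop (disch := simpa using hN)

theorem continuous_G₂ (h : IsSVIDurrleman b ρ α μ N N' N'' G₁ G₂) (hN : ∀ l, N l ≠ 0) :
    Continuous G₂ := by
  have := h.continuous_N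
  have := h.continuous_N'
  have : Continuous N'' := by
    rw [funext h.N''_eq]; fun_prop (disch := first | positivity | intro; positivity)
  rw [funext h.G₂_eq]
  fun_prop (disch := simpa using hN)

theorem tendsto_N'_atTop (h : IsSVIDurrleman b ρ α μ N N' N'' G₁ G₂) :
    Tendsto N' atTop (𝓝 (b * (ρ + 1))) := by
  rw [funext h.N'_eq]
  exact (tendsto_div_sqrt_sq_add_one_atTop.const_add ρ).const_mul b

theorem tendsto_N''_atTop (h : IsSVIDurrleman b ρ α μ N N' N'' G₁ G₂) :
    Tendsto N'' atTop (𝓝 0) := by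
  rw [funext h.N''_eq]
  exact tendsto_const_nhds.div_atTop ((tendsto_rpow_atTop (by norm_num)).comp
    (tendsto_atTop_add_const_right atTop 1 (tendsto_pow_atTop two_ne_zero)))

theorem tendsto_N_atTop (h : IsSVIDurrleman b ρ α μ N N' N'' G₁ G₂) (hb : 0 < b)
    (hρ : -1 < ρ) : Tendsto N atTop atTop := by
  have hc : 0 < b * (ρ + 1) := mul_pos hb (by linarith)
  refine tendsto_atTop_mono' atTop ?_
    (tendsto_atTop_add_const_left atTop α (tendsto_id.const_mul_atTop hc))
  filter_upwards [eventually_ge_atTop 0] with l hl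
  have : l ≤ √(l ^ 2 + 1) := le_sqrt_of_sq_le (by linarith)
  rw [h.N_eq, id]
  nlinarith [mul_le_mul_of_nonneg_left this hb.le]

theorem tendsto_N_div_atTop (h : IsSVIDurrleman b ρ α μ N N' N'' G₁ G₂) :
    Tendsto (fun l => N l / l) atTop (𝓝 (b * (ρ + 1))) := by
  have hsqrt : Tendsto (fun l : ℝ => √(l ^ 2 + 1) / l) atTop (𝓝 1) := by
    simpa using tendsto_div_sqrt_sq_add_one_atTop.inv₀ one_ne_zero
  have := ((tendsto_const_nhds (x := α)).div_atTop tendsto_id).add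
    ((hsqrt.const_add ρ).const_mul b)
  rw [zero_add] at this
  refine this.congr' ?_
  filter_upwards [eventually_gt_atTop 0] with l hl
  simp only [id, h.N_eq]
  field_simp

theorem tendsto_shift_div_N_atTop (h : IsSVIDurrleman b ρ α μ N N' N'' G₁ G₂)
    (hb : 0 < b) (hρ : -1 < ρ) :
    Tendsto (fun l => (l + μ) / (2 * N l)) atTop (𝓝 (1 / (2 * (b * (ρ + 1))))) := by
  have hμ : Tendsto (fun l : ℝ => 1 + μ / l) atTop (𝓝 1) := by
    simpa using ((tendsto_const_nhds (x := μ)).div_atTop tendsto_id).const_add (1 : ℝ)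
  have hc : 0 < b * (ρ + 1) := mul_pos hb (by linarith)
  refine (hμ.div (h.tendsto_N_div_atTop.const_mul 2) (by positivity)).congr' ?_
  filter_upwards [eventually_gt_atTop 0] with l hl
  simp only [Pi.div_apply]
  field_simp

theorem tendsto_G₂_atTop (h : IsSVIDurrleman b ρ α μ N N' N'' G₁ G₂) (hb : 0 < b)
    (hρ : -1 < ρ) : Tendsto G₂ atTop (𝓝 0) := by
  rw [funext h.G₂_eq]
  simpa using h.tendsto_N''_atTop.sub
    ((h.tendsto_N'_atTop.pow 2).div_atTop ((h.tendsto_N_atTop hb hρ).const_mul_atTop two_pos))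

theorem tendsto_G₁_atTop (h : IsSVIDurrleman b ρ α μ N N' N'' G₁ G₂) (hb : 0 < b)
    (hρ : -1 < ρ) :
    Tendsto G₁ atTop (𝓝 ((1 / 2 - b * (ρ + 1) / 4) * (1 / 2 + b * (ρ + 1) / 4))) := by
  have hc : 0 < b * (ρ + 1) := mul_pos hb (by linarith)
  have hr := h.tendsto_shift_div_N_atTop hb hρ
  have hN' := h.tendsto_N'_atTop
  have := ((tendsto_const_nhds (x := (1 : ℝ))).sub (hN'.mul (hr.add_const (1 / 4)))).mul
    ((tendsto_const_nhds (x := (1 : ℝ))).sub (hN'.mul (hr.sub_const (1 / 4))))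
  have hhalf : b * (ρ + 1) * (1 / (2 * (b * (ρ + 1)))) = 1 / 2 := by
    rw [mul_one_div, div_eq_iff (by positivity)]; ring
  have hlim : (1 - b * (ρ + 1) * (1 / (2 * (b * (ρ + 1))) + 1 / 4)) *
      (1 - b * (ρ + 1) * (1 / (2 * (b * (ρ + 1))) - 1 / 4)) =
      (1 / 2 - b * (ρ + 1) / 4) * (1 / 2 + b * (ρ + 1) / 4) := by
    linear_combination (b * (ρ + 1) * (1 / (2 * (b * (ρ + 1)))) - 3 / 2) * hhalf
  rw [funext h.G₁_eq, ← hlim]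
  exact this

theorem tendsto_neg_G₂_div_G₁_atTop (h : IsSVIDurrleman b ρ α μ N N' N'' G₁ G₂) (hb : 0 < b)
    (hρ : -1 < ρ) (hc : b * (1 + ρ) ≠ 2) :
    Tendsto (fun l => -G₂ l / (2 * G₁ l)) atTop (𝓝 0) := by
  have hc₀ : 0 < b * (ρ + 1) := mul_pos hb (by linarith)
  have hL : (1 / 2 - b * (ρ + 1) / 4) * (1 / 2 + b * (ρ + 1) / 4) ≠ 0 :=
    mul_ne_zero (by contrapose! hc; linarith) (by positivity)
  simpa [Pi.div_def] using (h.tendsto_G₂_atTop hb hρ).neg.div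
    ((h.tendsto_G₁_atTop hb hρ).const_mul 2) (mul_ne_zero two_ne_zero hL)

theorem tendsto_neg_G₂_div_G₁_cocompact (h : IsSVIDurrleman b ρ α μ N N' N'' G₁ G₂)
    (hb : 0 < b) (hρ₁ : -1 < ρ) (hρ₂ : ρ < 1) (hc₁ : b * (1 + ρ) ≠ 2) (hc₂ : b * (1 - ρ) ≠ 2) :
    Tendsto (fun l => -G₂ l / (2 * G₁ l)) (cocompact ℝ) (𝓝 0) := by
  have hbot := (h.reflect.tendsto_neg_G₂_div_G₁_atTop hb (by linarith)
    (by rwa [← sub_eq_add_neg])).comp tendsto_neg_atBot_atTop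
  simp only [Function.comp_def, neg_neg] at hbot
  rw [cocompact_eq_atBot_atTop]
  exact hbot.sup (h.tendsto_neg_G₂_div_G₁_atTop hb hρ₁ hc₁)

end IsSVIDurrleman

theorem sigma_star_characterization_general
    (b ρ α μ : ℝ) (hb : 0 < b) (hρ₁ : -1 < ρ) (hρ₂ : ρ < 1)
    (hα : 0 < α + b * Real.sqrt (1 - ρ ^ 2))
    (h₁ : b * (1 + ρ) < 2) (h₂ : b * (1 - ρ) < 2)
    (N N' N'' G₁ G₂ : ℝ → ℝ)
    (hN : ∀ l, N l = α + b * (ρ * l + Real.sqrt (l ^ 2 + 1)))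
    (hN' : ∀ l, N' l = b * (ρ + l / Real.sqrt (l ^ 2 + 1)))
    (hN'' : ∀ l, N'' l = b / (l ^ 2 + 1) ^ ((3 : ℝ) / 2))
    (hG₁ : ∀ l, G₁ l =
        (1 - N' l * ((l + μ) / (2 * N l) + 1 / 4)) *
        (1 - N' l * ((l + μ) / (2 * N l) - 1 / 4)))
    (hG₂ : ∀ l, G₂ l = N'' l - (N' l) ^ 2 / (2 * N l))
    (hfp : ∀ l, 0 < 1 - N' l * ((l + μ) / (2 * N l) + 1 / 4))
    (hfm : ∀ l, 0 < 1 - N' l * ((l + μ) / (2 * N l) - 1 / 4))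
    (l₁ l₂ : ℝ)
    (hpos : ∀ l, 0 < G₂ l ↔ l₁ < l ∧ l < l₂)
    (σstar : ℝ)
    (hσstar : σstar =
      sSup ((fun l => -G₂ l / (2 * G₁ l)) '' {l : ℝ | l ≤ l₁ ∨ l₂ ≤ l})) :
    (∃ l₀ : ℝ, (l₀ ≤ l₁ ∨ l₂ ≤ l₀) ∧ -G₂ l₀ / (2 * G₁ l₀) = σstar) ∧
    0 ≤ σstar ∧
    ∀ σ : ℝ, 0 < σ →
      ((∀ l : ℝ, 0 ≤ G₁ l + G₂ l / (2 * σ)) ↔ σstar ≤ σ) := by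
  have h : IsSVIDurrleman b ρ α μ N N' N'' G₁ G₂ := ⟨hN, hN', hN'', hG₁, hG₂⟩
  have hN_pos := h.N_pos hb.le (by nlinarith) hα
  have hG₁_pos (l : ℝ) : 0 < G₁ l := hG₁ l ▸ mul_pos (hfp l) (hfm l)
  set S : Set ℝ := {l | l ≤ l₁ ∨ l₂ ≤ l}
  set f : ℝ → ℝ := fun l => -G₂ l / (2 * G₁ l)
  have hf_nonneg : ∀ l ∈ S, 0 ≤ f l := fun l hl =>
    div_nonneg (neg_nonneg.2 <| not_lt.1 fun hlt => by
      rcases hl with hl | hl <;> linarith [(hpos l).1 hlt]) (by linarith [hG₁_pos l])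
  have hf_cont : Continuous f := (h.continuous_G₂ fun l => (hN_pos l).ne').neg.div
    (continuous_const.mul (h.continuous_G₁ fun l => (hN_pos l).ne')) fun l => by
      have := hG₁_pos l; positivity
  obtain ⟨l₀, hl₀, hmax⟩ := exists_isMaxOn_of_nonneg_of_tendsto_cocompact hf_cont
    (isClosed_Iic.union isClosed_Ici) ⟨l₁, Or.inl le_rfl⟩ hf_nonneg
    (h.tendsto_neg_G₂_div_G₁_cocompact hb hρ₁ hρ₂ h₁.ne h₂.ne)
  have hσ : σstar = f l₀ := hσstar ▸
    IsGreatest.csSup_eq ⟨Set.mem_image_of_mem f hl₀, Set.forall_mem_image.2 hmax⟩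
  refine ⟨⟨l₀, hl₀, hσ.symm⟩, hσ ▸ hf_nonneg l₀ hl₀,
    fun σ hσ_pos => ⟨fun hnn => ?_, fun hle l => ?_⟩⟩
  · exact hσ ▸ (nonneg_add_div_iff_neg_div_le (hG₁_pos l₀) hσ_pos).1 (hnn l₀)
  by_cases hl : l ∈ S
  · exact (nonneg_add_div_iff_neg_div_le (hG₁_pos l) hσ_pos).2 ((hmax hl).trans (hσ ▸ hle))
  · have hG₂_pos := (hpos l).2 (by simpa [S, not_or] using hl)
    have := hG₁_pos l
    positivity

/-- under the Fukasawa conditions, the threshold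
`σ* = sup_{l ≤ l₁ ∨ l ≥ l₂} (−G₂(l)/(2G₁(l)))` is nonnegative and attained,
and for every `σ > 0` the Durrleman function `G₁ + G₂/(2σ)` is nonnegative on
`ℝ` if and only if `σ ≥ σ*`. -/
theorem sigma_star_characterization
    (b ρ α μ : ℝ) (hb : 0 < b) (hρ₁ : -1 < ρ) (hρ₂ : ρ < 1)
    (hα : 0 < α + b * Real.sqrt (1 - ρ ^ 2))
    (h₁ : b * (1 + ρ) < 2) (h₂ : b * (1 - ρ) < 2)
    (N N' N'' G₁ G₂ : ℝ → ℝ)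
    (hN : ∀ l, N l = α + b * (ρ * l + Real.sqrt (l ^ 2 + 1)))
    (hN' : ∀ l, N' l = b * (ρ + l / Real.sqrt (l ^ 2 + 1)))
    (hN'' : ∀ l, N'' l = b / (l ^ 2 + 1) ^ ((3 : ℝ) / 2))
    (hG₁ : ∀ l, G₁ l =
        (1 - N' l * ((l + μ) / (2 * N l) + 1 / 4)) *
        (1 - N' l * ((l + μ) / (2 * N l) - 1 / 4)))
    (hG₂ : ∀ l, G₂ l = N'' l - (N' l) ^ 2 / (2 * N l))
    (hfp : ∀ l, 0 < 1 - N' l * ((l + μ) / (2 * N l) + 1 / 4))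
    (hfm : ∀ l, 0 < 1 - N' l * ((l + μ) / (2 * N l) - 1 / 4))
    (l₁ l₂ : ℝ) (hl₁ : l₁ < 0) (hl₂ : 0 < l₂)
    (hz₁ : G₂ l₁ = 0) (hz₂ : G₂ l₂ = 0)
    (hpos : ∀ l, 0 < G₂ l ↔ l₁ < l ∧ l < l₂)
    (σstar : ℝ)
    (hσstar : σstar =
      sSup ((fun l => -G₂ l / (2 * G₁ l)) '' {l : ℝ | l ≤ l₁ ∨ l₂ ≤ l})) :
    (∃ l₀ : ℝ, (l₀ ≤ l₁ ∨ l₂ ≤ l₀) ∧ -G₂ l₀ / (2 * G₁ l₀) = σstar) ∧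
    0 ≤ σstar ∧
    ∀ σ : ℝ, 0 < σ →
      ((∀ l : ℝ, 0 ≤ G₁ l + G₂ l / (2 * σ)) ↔ σstar ≤ σ) :=
  sigma_star_characterization_general b ρ α μ hb hρ₁ hρ₂ hα h₁ h₂ N N' N'' G₁ G₂ hN hN' hN'' hG₁ hG₂
    hfp hfm l₁ l₂ hpos σstar hσstar
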